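/- For any completely positive trace-decreasing (CPTD) map E on density operators, and any two density operators ρ and σ with t(E|ρ) := Tr(E[ρ]) > 0 and t(E|σ) := Tr(E[σ]) > 0, the sine distance C(ρ,σ) := √(1 − F(ρ,σ)) satisfies C(ρ,σ) ≥ t(E|ρ) · C(E[ρ]/t(E|ρ), E[σ]/t(E|σ)), where F is the Uhlmann fidelity. -/

import Mathlib

open Matrix Kronecker MeasureTheory ComplexOrder

noncomputable section

def msqrt {α : Type*} [Fintype α] [DecidableEq α] (A : Matrix α α ℂ) : Matrix α α ℂ :=
  open scoped Classical in
  if h : A.PosSemidef then (h.1.eigenvectorUnitary : Matrix α α ℂ) *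
    diagonal ((↑) ∘ (√·) ∘ h.1.eigenvalues) * (star h.1.eigenvectorUnitary : Matrix α α ℂ) else 0

def fid {α : Type*} [Fintype α] [DecidableEq α] (ρ σ : Matrix α α ℂ) : ℝ :=
  ((msqrt (msqrt ρ * σ * msqrt ρ)).trace).re ^ 2

def sineDist {α : Type*} [Fintype α] [DecidableEq α] (ρ σ : Matrix α α ℂ) : ℝ :=
  Real.sqrt (1 - fid ρ σ)

def traceDist {α : Type*} [Fintype α] [DecidableEq α] (ρ σ : Matrix α α ℂ) : ℝ :=
  (1/2) * ((msqrt ((ρ - σ)ᴴ * (ρ - σ))).trace).re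

def IsDensity {α : Type*} [Fintype α] (ρ : Matrix α α ℂ) : Prop :=
  ρ.PosSemidef ∧ ρ.trace = 1

def IsPureState {α : Type*} [Fintype α] (ρ : Matrix α α ℂ) : Prop :=
  IsDensity ρ ∧ ∃ ψ : α → ℂ, ρ = Matrix.vecMulVec ψ (star ψ)

def tr' {α : Type*} [Fintype α] (A : Matrix α α ℂ) : ℝ := A.trace.re

def nstate {α : Type*} [Fintype α] (ρ : Matrix α α ℂ) : Matrix α α ℂ :=
  (((tr' ρ : ℝ) : ℂ))⁻¹ • ρ

def IsCPTD {α β : Type*} [Fintype α] [Fintype β] [DecidableEq α] [DecidableEq β]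
    (E : Matrix α α ℂ →ₗ[ℂ] Matrix β β ℂ) : Prop :=
  ∃ (k : ℕ) (K : Fin k → Matrix β α ℂ),
    (∀ ρ, E ρ = ∑ i, K i * ρ * (K i)ᴴ) ∧ (1 - ∑ i, (K i)ᴴ * K i).PosSemidef

def IsCPTP {α β : Type*} [Fintype α] [Fintype β] [DecidableEq α] [DecidableEq β]
    (E : Matrix α α ℂ →ₗ[ℂ] Matrix β β ℂ) : Prop :=
  ∃ (k : ℕ) (K : Fin k → Matrix β α ℂ),
    (∀ ρ, E ρ = ∑ i, K i * ρ * (K i)ᴴ) ∧ (∑ i, (K i)ᴴ * K i = 1)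

def tensId {α β γ : Type*} [Fintype α]
    (E : Matrix α α ℂ → Matrix β β ℂ)
    (ρ : Matrix (α × γ) (α × γ) ℂ) : Matrix (β × γ) (β × γ) ℂ :=
  Matrix.of fun p q => E (Matrix.of fun a b => ρ (a, p.2) (b, q.2)) p.1 q.1

def maxEnt (d : ℕ) : Matrix (Fin d × Fin d) (Fin d × Fin d) ℂ :=
  Matrix.of fun p q => if p.1 = p.2 ∧ q.1 = q.2 then ((d : ℂ))⁻¹ else 0

def ptraceSnd {α β : Type*} [Fintype β] (ρ : Matrix (α × β) (α × β) ℂ) : Matrix α α ℂ :=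
  Matrix.of fun a b => ∑ j, ρ (a, j) (b, j)

def ptraceFst {α β : Type*} [Fintype α] (ρ : Matrix (α × β) (α × β) ℂ) : Matrix β β ℂ :=
  Matrix.of fun i j => ∑ a, ρ (a, i) (a, j)

def choiSine {m n : ℕ} (E₁ E₂ : Matrix (Fin m) (Fin m) ℂ →ₗ[ℂ] Matrix (Fin n) (Fin n) ℂ) : ℝ :=
  sineDist (nstate (tensId (⇑E₁) (maxEnt m))) (nstate (tensId (⇑E₂) (maxEnt m)))

def diamondSine {m n : ℕ} (E₁ E₂ : Matrix (Fin m) (Fin m) ℂ →ₗ[ℂ] Matrix (Fin n) (Fin n) ℂ) : ℝ :=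
  sSup { x | ∃ ρ : Matrix (Fin m × Fin m) (Fin m × Fin m) ℂ, IsPureState ρ ∧
    tr' (tensId (⇑E₁) ρ) ≠ 0 ∧ tr' (tensId (⇑E₂) ρ) ≠ 0 ∧
    x = sineDist (nstate (tensId (⇑E₁) ρ)) (nstate (tensId (⇑E₂) ρ)) }

/-!
The root fidelity `√F(A, B) = Tr √(√A B √A)` is the largest value of `Re Tr X` over all `X` for
which the block matrix `[[A, X], [Xᴴ, B]]` is positive semidefinite (Uhlmann's theorem, proved
with polar decompositions). Write the CPTD map as `E ρ = ∑ Kᵢ ρ Kᵢᴴ` and complete it by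
`r = √(1 - ∑ Kᵢᴴ Kᵢ)`, so that `Tr M = Tr E M + Tr r M rᴴ`. Applying `E` and `r · rᴴ` blockwise
to an optimal `X` for `(ρ, σ)` keeps the block matrices positive; with `t = Tr E ρ`,
`t' = Tr E σ` and `f` the root fidelity of the normalized outputs this gives
`√F(ρ, σ) ≤ √(t t') f + √((1 - t)(1 - t'))`. Cauchy–Schwarz turns this into
`F(ρ, σ) ≤ 1 - t (1 - f²)`, and `t² ≤ t` finishes the proof.
-/

open scoped MatrixOrder

def rootFid {n : Type*} [Fintype n] [DecidableEq n] (A B : Matrix n n ℂ) : ℝ :=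
  (CFC.sqrt (CFC.sqrt A * B * CFC.sqrt A)).trace.re

namespace Matrix

variable {k m n : Type*} [Fintype k] [Fintype m] [Fintype n]

lemma PosSemidef.re_trace_nonneg {A : Matrix n n ℂ} (hA : A.PosSemidef) : 0 ≤ A.trace.re :=
  (Complex.nonneg_iff.mp hA.trace_nonneg).1

lemma re_trace_conjTranspose_mul_le (P Q : Matrix m n ℂ) :
    (Pᴴ * Q).trace.re ≤ √(Pᴴ * P).trace.re * √(Qᴴ * Q).trace.re := by
  let v (P : Matrix m n ℂ) : EuclideanSpace ℂ (n × m) := WithLp.toLp 2 P.vec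
  have hinner (P Q : Matrix m n ℂ) : inner ℂ (v P) (v Q) = (Pᴴ * Q).trace := by
    rw [EuclideanSpace.inner_toLp_toLp, dotProduct_comm, star_vec_dotProduct_vec]
  have h := re_inner_le_norm (𝕜 := ℂ) (v P) (v Q)
  rwa [norm_eq_sqrt_re_inner (𝕜 := ℂ), norm_eq_sqrt_re_inner (𝕜 := ℂ) (v Q), hinner, hinner,
    hinner] at h

lemma posSemidef_fromBlocks_conjTranspose_mul (P : Matrix k m ℂ) (Q : Matrix k n ℂ) :
    (fromBlocks (Pᴴ * P) (Pᴴ * Q) (Pᴴ * Q)ᴴ (Qᴴ * Q)).PosSemidef := by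
  have h : (fromCols P Q)ᴴ * fromCols P Q = fromBlocks (Pᴴ * P) (Pᴴ * Q) (Pᴴ * Q)ᴴ (Qᴴ * Q) := by
    rw [conjTranspose_fromCols_eq_fromRows_conjTranspose, fromRows_mul_fromCols, conjTranspose_mul,
      conjTranspose_conjTranspose]
  exact h ▸ posSemidef_conjTranspose_mul_self _

omit [Fintype n] in
lemma conjTranspose_fromRows_mul_fromRows {l : Type*} (P₁ : Matrix m n ℂ) (P₂ : Matrix k n ℂ)
    (Q₁ : Matrix m l ℂ) (Q₂ : Matrix k l ℂ) :
    (fromRows P₁ P₂)ᴴ * fromRows Q₁ Q₂ = P₁ᴴ * Q₁ + P₂ᴴ * Q₂ := by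
  rw [conjTranspose_fromRows_eq_fromCols_conjTranspose, fromCols_mul_fromRows]

variable [DecidableEq n]

lemma conjTranspose_sqrt (A : Matrix n n ℂ) : (CFC.sqrt A)ᴴ = CFC.sqrt A :=
  (CFC.sqrt_nonneg A).posSemidef.1

lemma conjTranspose_mul_self_le_one_mul [DecidableEq m] {K : Matrix k m ℂ} {L : Matrix m n ℂ}
    (hK : Kᴴ * K ≤ 1) (hL : Lᴴ * L ≤ 1) : (K * L)ᴴ * (K * L) ≤ 1 := by
  have h : 1 - (K * L)ᴴ * (K * L) = Lᴴ * (1 - Kᴴ * K) * L + (1 - Lᴴ * L) := by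
    simp only [conjTranspose_mul, Matrix.mul_sub, Matrix.sub_mul, Matrix.mul_one, Matrix.mul_assoc]
    abel
  rw [le_iff, h]
  exact ((le_iff.mp hK).conjTranspose_mul_mul_same L).add (le_iff.mp hL)

lemma re_trace_mul_conjTranspose_mul_le {W : Matrix k n ℂ} (hW : Wᴴ * W ≤ 1) (S : Matrix n m ℂ) :
    ((W * S)ᴴ * (W * S)).trace.re ≤ (Sᴴ * S).trace.re := by
  have h := ((le_iff.mp hW).conjTranspose_mul_mul_same S).re_trace_nonneg
  have hWS : (W * S)ᴴ * (W * S) = Sᴴ * (Wᴴ * W) * S := by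
    simp only [conjTranspose_mul, Matrix.mul_assoc]
  rw [Matrix.mul_sub, Matrix.sub_mul, trace_sub, Complex.sub_re, Matrix.mul_one, ← hWS] at h
  linarith

lemma re_trace_conjTranspose_mul_mul_le {U V : Matrix k n ℂ} (hU : Uᴴ * U ≤ 1)
    (hV : Vᴴ * V ≤ 1) {T : Matrix n n ℂ} (hT : T.PosSemidef) :
    (Uᴴ * V * T).trace.re ≤ T.trace.re := by
  set S := CFC.sqrt T
  have hSS : Sᴴ * S = T := by rw [conjTranspose_sqrt, CFC.sqrt_mul_sqrt_self T hT.nonneg]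
  have htr : (Uᴴ * V * T).trace = ((U * S)ᴴ * (V * S)).trace := by
    rw [← hSS, conjTranspose_sqrt, ← Matrix.mul_assoc, trace_mul_comm]
    simp only [conjTranspose_mul, conjTranspose_sqrt, Matrix.mul_assoc, S]
  calc (Uᴴ * V * T).trace.re
      ≤ √((U * S)ᴴ * (U * S)).trace.re * √((V * S)ᴴ * (V * S)).trace.re :=
        htr ▸ re_trace_conjTranspose_mul_le _ _
    _ ≤ √(Sᴴ * S).trace.re * √(Sᴴ * S).trace.re := by
        gcongr ?_ * ?_ <;> apply Real.sqrt_le_sqrt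
        exacts [re_trace_mul_conjTranspose_mul_le hU S, re_trace_mul_conjTranspose_mul_le hV S]
    _ = T.trace.re := by
        rw [Real.mul_self_sqrt (posSemidef_conjTranspose_mul_self S).re_trace_nonneg, hSS]

/-- `x ↦ (√x)⁻¹` inverts `√` on the nonzero spectrum and vanishes at `0`, since `0⁻¹ = 0`. -/
def polarFactor (P : Matrix m n ℂ) : Matrix m n ℂ := P * cfc (fun x : ℝ => (√x)⁻¹) (Pᴴ * P)

section polarFactor

variable (P : Matrix m n ℂ)

lemma conjTranspose_polarFactor :
    (polarFactor P)ᴴ = cfc (fun x : ℝ => (√x)⁻¹) (Pᴴ * P) * Pᴴ := by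
  rw [polarFactor, conjTranspose_mul, (cfc_predicate _ (Pᴴ * P) : IsSelfAdjoint _).isHermitian.eq]

lemma conjTranspose_polarFactor_mul_self_le_one : (polarFactor P)ᴴ * polarFactor P ≤ 1 := by
  have hP : IsSelfAdjoint (Pᴴ * P) := (posSemidef_conjTranspose_mul_self P).1
  have hc (f : ℝ → ℝ) : ContinuousOn f (spectrum ℝ (Pᴴ * P)) :=
    finite_real_spectrum.continuousOn f
  have h : (polarFactor P)ᴴ * polarFactor P =
      cfc (fun x : ℝ => (√x)⁻¹ * x * (√x)⁻¹) (Pᴴ * P) := by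
    rw [cfc_mul _ _ _ (hc _) (hc _), cfc_mul _ _ _ (hc _) (hc _), cfc_id' ℝ _ hP,
      conjTranspose_polarFactor, polarFactor]
    simp only [Matrix.mul_assoc]
  refine h ▸ cfc_le_one _ _ fun x _ => ?_
  rcases le_or_gt x 0 with hx | hx
  · simp [Real.sqrt_eq_zero'.mpr hx]
  · have hs : √x ≠ 0 := (Real.sqrt_pos.mpr hx).ne'
    field_simp
    rw [Real.sq_sqrt hx.le]

lemma conjTranspose_polarFactor_mul : (polarFactor P)ᴴ * P = CFC.sqrt (Pᴴ * P) := by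
  have hP : IsSelfAdjoint (Pᴴ * P) := (posSemidef_conjTranspose_mul_self P).1
  have hc (f : ℝ → ℝ) : ContinuousOn f (spectrum ℝ (Pᴴ * P)) :=
    finite_real_spectrum.continuousOn f
  rw [conjTranspose_polarFactor, Matrix.mul_assoc,
    CFC.sqrt_eq_real_sqrt _ (posSemidef_conjTranspose_mul_self P).nonneg, cfcₙ_eq_cfc]
  nth_rw 2 [← cfc_id' ℝ (Pᴴ * P) hP]
  rw [← cfc_mul _ _ _ (hc _) (hc _)]
  exact cfc_congr fun x _ => by rw [inv_mul_eq_div, Real.div_sqrt]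

/-- With `W = polarFactor P` and `S = √(Pᴴ P)`, `(P - W S)ᴴ (P - W S) = -S (1 - Wᴴ W) S` is both
`≥ 0` and `≤ 0`. -/
lemma polarFactor_mul_sqrt : polarFactor P * CFC.sqrt (Pᴴ * P) = P := by
  set W := polarFactor P
  set S := CFC.sqrt (Pᴴ * P)
  have hS : Sᴴ = S := conjTranspose_sqrt _
  have hSS : S * S = Pᴴ * P := CFC.sqrt_mul_sqrt_self _ (posSemidef_conjTranspose_mul_self P).nonneg
  have hWP : Wᴴ * P = S := conjTranspose_polarFactor_mul P
  have hPW : Pᴴ * W = S := by rw [← hS, ← hWP, conjTranspose_mul, conjTranspose_conjTranspose]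
  have hD : (P - W * S)ᴴ * (P - W * S) = -(Sᴴ * (1 - Wᴴ * W) * S) := by
    simp only [conjTranspose_sub, conjTranspose_mul, hS, Matrix.sub_mul, Matrix.mul_sub,
      Matrix.mul_one, Matrix.mul_assoc, hWP]
    rw [← Matrix.mul_assoc Pᴴ, hPW, ← hSS]
    noncomm_ring
  rw [eq_comm, ← sub_eq_zero, ← conjTranspose_mul_self_eq_zero]
  refine le_antisymm ?_ (posSemidef_conjTranspose_mul_self _).nonneg
  rw [hD, neg_nonpos]
  exact ((le_iff.mp (conjTranspose_polarFactor_mul_self_le_one P)).conjTranspose_mul_mul_same S).nonneg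

end polarFactor

lemma PosSemidef.exists_eq_conjTranspose_mul_of_fromBlocks [DecidableEq m] {A : Matrix m m ℂ}
    {X : Matrix m n ℂ} {B : Matrix n n ℂ} (hM : (fromBlocks A X Xᴴ B).PosSemidef) :
    ∃ (P : Matrix (m ⊕ n) m ℂ) (Q : Matrix (m ⊕ n) n ℂ),
      A = Pᴴ * P ∧ X = Pᴴ * Q ∧ B = Qᴴ * Q := by
  set N := CFC.sqrt (fromBlocks A X Xᴴ B)
  have hN : Nᴴ * N = fromBlocks A X Xᴴ B := by
    rw [conjTranspose_sqrt, CFC.sqrt_mul_sqrt_self _ hM.nonneg]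
  rw [← fromCols_toCols N, conjTranspose_fromCols_eq_fromRows_conjTranspose, fromRows_mul_fromCols,
    fromBlocks_inj] at hN
  exact ⟨N.toCols₁, N.toCols₂, hN.1.symm, hN.2.1.symm, hN.2.2.2.symm⟩

lemma PosSemidef.fromBlocks_mul_mul_conjTranspose {A X B : Matrix n n ℂ}
    (hM : (fromBlocks A X Xᴴ B).PosSemidef) (K : Matrix m n ℂ) :
    (fromBlocks (K * A * Kᴴ) (K * X * Kᴴ) (K * X * Kᴴ)ᴴ (K * B * Kᴴ)).PosSemidef := by
  obtain ⟨P, Q, rfl, rfl, rfl⟩ := hM.exists_eq_conjTranspose_mul_of_fromBlocks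
  simpa only [conjTranspose_mul, conjTranspose_conjTranspose, Matrix.mul_assoc] using
    posSemidef_fromBlocks_conjTranspose_mul (P * Kᴴ) (Q * Kᴴ)

lemma rootFid_eq_re_trace_sqrt (A : Matrix n n ℂ) {B : Matrix n n ℂ} (hB : B.PosSemidef) :
    rootFid A B = (CFC.sqrt ((CFC.sqrt B * CFC.sqrt A)ᴴ * (CFC.sqrt B * CFC.sqrt A))).trace.re := by
  have h : (CFC.sqrt B * CFC.sqrt A)ᴴ * (CFC.sqrt B * CFC.sqrt A) =
      CFC.sqrt A * B * CFC.sqrt A := by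
    rw [conjTranspose_mul, conjTranspose_sqrt, conjTranspose_sqrt, Matrix.mul_assoc,
      ← Matrix.mul_assoc (CFC.sqrt B), CFC.sqrt_mul_sqrt_self B hB.nonneg, ← Matrix.mul_assoc]
  rw [rootFid, h]

theorem re_trace_conjTranspose_mul_le_rootFid (P Q : Matrix k n ℂ) :
    (Pᴴ * Q).trace.re ≤ rootFid (Pᴴ * P) (Qᴴ * Q) := by
  set a := CFC.sqrt (Pᴴ * P)
  set b := CFC.sqrt (Qᴴ * Q)
  have ha : aᴴ = a := conjTranspose_sqrt _
  set C := b * a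
  have htr : (Pᴴ * Q).trace =
      ((polarFactor P)ᴴ * (polarFactor Q * polarFactor C) * CFC.sqrt (Cᴴ * C)).trace := by
    rw [Matrix.mul_assoc, Matrix.mul_assoc, polarFactor_mul_sqrt C, ← Matrix.mul_assoc _ b a,
      polarFactor_mul_sqrt Q, ← Matrix.mul_assoc, trace_mul_comm _ a, ← Matrix.mul_assoc,
      ← ha, ← conjTranspose_mul, polarFactor_mul_sqrt P]
  rw [rootFid_eq_re_trace_sqrt _ (posSemidef_conjTranspose_mul_self Q), htr]
  exact re_trace_conjTranspose_mul_mul_le (conjTranspose_polarFactor_mul_self_le_one P)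
    (conjTranspose_mul_self_le_one_mul (conjTranspose_polarFactor_mul_self_le_one Q)
      (conjTranspose_polarFactor_mul_self_le_one C)) (CFC.sqrt_nonneg _).posSemidef

lemma PosSemidef.re_trace_le_rootFid_of_fromBlocks {A X B : Matrix n n ℂ}
    (hM : (fromBlocks A X Xᴴ B).PosSemidef) : X.trace.re ≤ rootFid A B := by
  obtain ⟨P, Q, rfl, rfl, rfl⟩ := hM.exists_eq_conjTranspose_mul_of_fromBlocks
  exact re_trace_conjTranspose_mul_le_rootFid P Q

lemma PosSemidef.re_trace_le_of_fromBlocks {A X B : Matrix n n ℂ}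
    (hM : (fromBlocks A X Xᴴ B).PosSemidef) : X.trace.re ≤ √A.trace.re * √B.trace.re := by
  obtain ⟨P, Q, rfl, rfl, rfl⟩ := hM.exists_eq_conjTranspose_mul_of_fromBlocks
  exact re_trace_conjTranspose_mul_le P Q

/-- The optimal block is `X = √A Vᴴ √B` with `V` the polar factor of `√B √A`; it is the Gram
block of the columns `(V √A, √(1 - Vᴴ V) √A)` and `(√B, 0)`. -/
theorem exists_fromBlocks_posSemidef_re_trace_eq_rootFid {A B : Matrix n n ℂ}
    (hA : A.PosSemidef) (hB : B.PosSemidef) :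
    ∃ X, (fromBlocks A X Xᴴ B).PosSemidef ∧ X.trace.re = rootFid A B := by
  set a := CFC.sqrt A
  set b := CFC.sqrt B
  have ha : aᴴ = a := conjTranspose_sqrt _
  have hb : bᴴ = b := conjTranspose_sqrt _
  have haa : a * a = A := CFC.sqrt_mul_sqrt_self _ hA.nonneg
  have hbb : b * b = B := CFC.sqrt_mul_sqrt_self _ hB.nonneg
  set V := polarFactor (b * a)
  set r := CFC.sqrt (1 - Vᴴ * V)
  have hrr : rᴴ * r = 1 - Vᴴ * V := by
    rw [conjTranspose_sqrt,
      CFC.sqrt_mul_sqrt_self _ (sub_nonneg.mpr (conjTranspose_polarFactor_mul_self_le_one _))]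
  refine ⟨a * Vᴴ * b, ?_, ?_⟩
  · have h := posSemidef_fromBlocks_conjTranspose_mul (fromRows (V * a) (r * a))
      (fromRows b (0 : Matrix n n ℂ))
    simp only [conjTranspose_fromRows_mul_fromRows] at h
    convert h using 2
    · calc A = a * (Vᴴ * V + rᴴ * r) * a := by rw [hrr, add_sub_cancel, Matrix.mul_one, haa]
        _ = _ := by simp only [conjTranspose_mul, ha, Matrix.mul_add, Matrix.add_mul,
          Matrix.mul_assoc]
    · simp [conjTranspose_mul, ha, Matrix.mul_assoc]
    · simp [conjTranspose_mul, ha, hb, Matrix.mul_assoc]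
    · simp [hb, hbb]
  · rw [rootFid_eq_re_trace_sqrt _ hB, ← conjTranspose_polarFactor_mul, Matrix.mul_assoc,
      trace_mul_comm a, Matrix.mul_assoc]

end Matrix

section rootFid

open Matrix

variable {n : Type*} [Fintype n] [DecidableEq n] {A B : Matrix n n ℂ}

lemma Matrix.msqrt_eq_sqrt (hA : A.PosSemidef) : msqrt A = CFC.sqrt A := by
  rw [CFC.sqrt_eq_real_sqrt A hA.nonneg, cfcₙ_eq_cfc, hA.1.cfc_eq, IsHermitian.cfc, msqrt,
    dif_pos hA, Unitary.conjStarAlgAut_apply]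
  rfl

lemma Matrix.PosSemidef.sqrt_mul_mul_sqrt (hB : B.PosSemidef) (A : Matrix n n ℂ) :
    (CFC.sqrt A * B * CFC.sqrt A).PosSemidef := by
  simpa only [conjTranspose_sqrt] using hB.conjTranspose_mul_mul_same (CFC.sqrt A)

lemma fid_eq_rootFid_sq (hA : A.PosSemidef) (hB : B.PosSemidef) : fid A B = rootFid A B ^ 2 := by
  rw [fid, rootFid, msqrt_eq_sqrt hA, msqrt_eq_sqrt (hB.sqrt_mul_mul_sqrt A)]

lemma rootFid_nonneg (A B : Matrix n n ℂ) : 0 ≤ rootFid A B :=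
  (CFC.sqrt_nonneg _).posSemidef.re_trace_nonneg

lemma Matrix.PosSemidef.sqrt_smul (hA : A.PosSemidef) {c : ℝ} (hc : 0 ≤ c) :
    CFC.sqrt (c • A) = √c • CFC.sqrt A :=
  CFC.sqrt_unique
    (by rw [smul_mul_smul_comm, Real.mul_self_sqrt hc, CFC.sqrt_mul_sqrt_self A hA.nonneg])
    (smul_nonneg (Real.sqrt_nonneg c) (CFC.sqrt_nonneg A))

lemma rootFid_smul (hA : A.PosSemidef) (hB : B.PosSemidef) {a b : ℝ} (ha : 0 ≤ a) (hb : 0 ≤ b) :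
    rootFid (a • A) (b • B) = √a * √b * rootFid A B := by
  have h : CFC.sqrt (a • A) * (b • B) * CFC.sqrt (a • A) =
      (a * b) • (CFC.sqrt A * B * CFC.sqrt A) := by
    rw [hA.sqrt_smul ha, smul_mul_smul_comm, smul_mul_smul_comm, mul_right_comm,
      Real.mul_self_sqrt ha]
  rw [rootFid, rootFid, h, (hB.sqrt_mul_mul_sqrt A).sqrt_smul (mul_nonneg ha hb), trace_smul,
    Complex.real_smul, Complex.re_ofReal_mul, Real.sqrt_mul ha]

omit [DecidableEq n] in
lemma nstate_eq_smul (A : Matrix n n ℂ) : nstate A = (tr' A)⁻¹ • A := by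
  rw [nstate, ← Complex.ofReal_inv, Complex.coe_smul]

omit [DecidableEq n] in
lemma Matrix.PosSemidef.nstate (hA : A.PosSemidef) : (nstate A).PosSemidef :=
  nstate_eq_smul A ▸ hA.smul (inv_nonneg.mpr hA.re_trace_nonneg)

lemma rootFid_eq_mul_rootFid_nstate (hA : A.PosSemidef) (hB : B.PosSemidef) (htA : 0 < tr' A)
    (htB : 0 < tr' B) :
    rootFid A B = √(tr' A) * √(tr' B) * rootFid (nstate A) (nstate B) := by
  have hsmul {M : Matrix n n ℂ} (h : 0 < tr' M) : tr' M • nstate M = M := by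
    rw [nstate_eq_smul, smul_smul, mul_inv_cancel₀ h.ne', one_smul]
  rw [← rootFid_smul hA.nstate hB.nstate htA.le htB.le, hsmul htA, hsmul htB]

end rootFid

section Kraus

open Matrix

variable {ι m n : Type*} [Fintype ι] [Fintype m] [Fintype n] (K : ι → Matrix m n ℂ)

lemma Matrix.trace_sum_mul_mul_conjTranspose (M : Matrix n n ℂ) :
    (∑ i, K i * M * (K i)ᴴ).trace = (M * ∑ i, (K i)ᴴ * K i).trace := by
  simp only [trace_sum, Finset.mul_sum]
  exact Finset.sum_congr rfl fun i _ => by rw [trace_mul_cycle, trace_mul_comm]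

lemma Matrix.PosSemidef.sum_mul_mul_conjTranspose {M : Matrix n n ℂ} (hM : M.PosSemidef) :
    (∑ i, K i * M * (K i)ᴴ).PosSemidef :=
  posSemidef_sum _ fun i _ => hM.mul_mul_conjTranspose_same (K i)

variable [DecidableEq n]

lemma Matrix.PosSemidef.fromBlocks_sum_mul_mul_conjTranspose {A X B : Matrix n n ℂ}
    (hM : (fromBlocks A X Xᴴ B).PosSemidef) :
    (fromBlocks (∑ i, K i * A * (K i)ᴴ) (∑ i, K i * X * (K i)ᴴ) (∑ i, K i * X * (K i)ᴴ)ᴴ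
      (∑ i, K i * B * (K i)ᴴ)).PosSemidef := by
  convert posSemidef_sum Finset.univ fun i _ => hM.fromBlocks_mul_mul_conjTranspose (K i) using 1
  ext (i | i) (j | j) <;> simp [sum_apply, conjTranspose_sum]

lemma Matrix.trace_eq_trace_sum_mul_mul_conjTranspose_add
    (hK : (1 - ∑ i, (K i)ᴴ * K i).PosSemidef) (M : Matrix n n ℂ) :
    M.trace = (∑ i, K i * M * (K i)ᴴ).trace +
      (CFC.sqrt (1 - ∑ i, (K i)ᴴ * K i) * M * CFC.sqrt (1 - ∑ i, (K i)ᴴ * K i)).trace := by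
  rw [trace_mul_cycle, CFC.sqrt_mul_sqrt_self _ hK.nonneg, trace_mul_comm,
    trace_sum_mul_mul_conjTranspose, ← trace_add, ← Matrix.mul_add, add_sub_cancel, Matrix.mul_one]

end Kraus

namespace IsCPTD

open Matrix

variable {α β : Type*} [Fintype α] [Fintype β] [DecidableEq α] [DecidableEq β]
  {E : Matrix α α ℂ →ₗ[ℂ] Matrix β β ℂ}

lemma posSemidef (hE : IsCPTD E) {ρ : Matrix α α ℂ} (hρ : ρ.PosSemidef) : (E ρ).PosSemidef := by
  obtain ⟨k, K, hK, -⟩ := hE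
  exact hK ρ ▸ hρ.sum_mul_mul_conjTranspose K

/-- `r = √(1 - ∑ Kᵢᴴ Kᵢ)` is the Kraus operator completing `E` to a trace-preserving map. -/
lemma exists_trace_eq_add (hE : IsCPTD E) :
    ∃ (k : ℕ) (K : Fin k → Matrix β α ℂ) (r : Matrix α α ℂ),
      (∀ ρ, E ρ = ∑ i, K i * ρ * (K i)ᴴ) ∧ ∀ ρ, ρ.trace = (E ρ).trace + (r * ρ * rᴴ).trace := by
  obtain ⟨k, K, hK, hKtd⟩ := hE
  refine ⟨k, K, CFC.sqrt (1 - ∑ i, (K i)ᴴ * K i), hK, fun ρ => ?_⟩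
  rw [conjTranspose_sqrt, hK]
  exact trace_eq_trace_sum_mul_mul_conjTranspose_add K hKtd ρ

lemma tr'_le (hE : IsCPTD E) {ρ : Matrix α α ℂ} (hρ : ρ.PosSemidef) : tr' (E ρ) ≤ tr' ρ := by
  obtain ⟨k, K, r, -, htr⟩ := hE.exists_trace_eq_add
  have h := (hρ.mul_mul_conjTranspose_same r).re_trace_nonneg
  rw [tr', tr', htr ρ, Complex.add_re]
  linarith

theorem rootFid_le (hE : IsCPTD E) {ρ σ : Matrix α α ℂ} (hρ : ρ.PosSemidef)
    (hσ : σ.PosSemidef) :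
    rootFid ρ σ ≤ rootFid (E ρ) (E σ) + √(tr' ρ - tr' (E ρ)) * √(tr' σ - tr' (E σ)) := by
  obtain ⟨k, K, r, hK, htr⟩ := hE.exists_trace_eq_add
  obtain ⟨X, hX, hXtr⟩ := exists_fromBlocks_posSemidef_re_trace_eq_rootFid hρ hσ
  have hEX : (E X).trace.re ≤ rootFid (E ρ) (E σ) := by
    rw [hK, hK, hK]
    exact (hX.fromBlocks_sum_mul_mul_conjTranspose K).re_trace_le_rootFid_of_fromBlocks
  have hrX : (r * X * rᴴ).trace.re ≤ √(tr' ρ - tr' (E ρ)) * √(tr' σ - tr' (E σ)) := by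
    simpa only [tr', htr ρ, htr σ, Complex.add_re, add_sub_cancel_left] using
      (hX.fromBlocks_mul_mul_conjTranspose r).re_trace_le_of_fromBlocks
  rw [← hXtr, htr X, Complex.add_re]
  exact add_le_add hEX hrX

end IsCPTD

lemma mul_sqrt_one_sub_sq_le {t t' f g : ℝ} (ht : 0 ≤ t) (ht1 : t ≤ 1) (ht' : 0 ≤ t')
    (ht1' : t' ≤ 1) (hg : 0 ≤ g) (h : g ≤ √t * √t' * f + √(1 - t) * √(1 - t')) :
    t * √(1 - f ^ 2) ≤ √(1 - g ^ 2) := by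
  have hsq : g ^ 2 ≤ 1 - t * (1 - f ^ 2) := by
    have lagrange : (√t * √t' * f + √(1 - t) * √(1 - t')) ^ 2 +
        (√t * f * √(1 - t') - √(1 - t) * √t') ^ 2 =
        (√t ^ 2 * f ^ 2 + √(1 - t) ^ 2) * (√t' ^ 2 + √(1 - t') ^ 2) := by ring
    rw [Real.sq_sqrt ht, Real.sq_sqrt ht', Real.sq_sqrt (sub_nonneg.mpr ht1),
      Real.sq_sqrt (sub_nonneg.mpr ht1'), add_sub_cancel, mul_one] at lagrange
    nlinarith [pow_le_pow_left₀ hg h 2, sq_nonneg (√t * f * √(1 - t') - √(1 - t) * √t')]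
  rcases le_or_gt (1 - f ^ 2) 0 with hf | hf
  · rw [Real.sqrt_eq_zero'.mpr hf, mul_zero]
    exact Real.sqrt_nonneg _
  · have ht2 : t ^ 2 ≤ t := by nlinarith
    calc t * √(1 - f ^ 2) = √(t ^ 2 * (1 - f ^ 2)) := by
          rw [Real.sqrt_mul (sq_nonneg t), Real.sqrt_sq ht]
      _ ≤ √(1 - g ^ 2) :=
          Real.sqrt_le_sqrt (by nlinarith [mul_le_mul_of_nonneg_right ht2 hf.le])

/-- Extended processing inequality for the sine distance under CPTD maps. -/
theorem extended_processing_inequality_sine {m n : ℕ}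
    (E : Matrix (Fin m) (Fin m) ℂ →ₗ[ℂ] Matrix (Fin n) (Fin n) ℂ) (hE : IsCPTD E)
    (ρ σ : Matrix (Fin m) (Fin m) ℂ) (hρ : IsDensity ρ) (hσ : IsDensity σ)
    (htρ : 0 < tr' (E ρ)) (htσ : 0 < tr' (E σ)) :
    tr' (E ρ) * sineDist (nstate (E ρ)) (nstate (E σ)) ≤ sineDist ρ σ := by
  have htr_one {ω : Matrix (Fin m) (Fin m) ℂ} (hω : IsDensity ω) : tr' ω = 1 := by
    simp [tr', hω.2]
  have hEρ := hE.posSemidef hρ.1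
  have hEσ := hE.posSemidef hσ.1
  have key := hE.rootFid_le hρ.1 hσ.1
  rw [rootFid_eq_mul_rootFid_nstate hEρ hEσ htρ htσ, htr_one hρ, htr_one hσ] at key
  rw [sineDist, sineDist, fid_eq_rootFid_sq hρ.1 hσ.1, fid_eq_rootFid_sq hEρ.nstate hEσ.nstate]
  exact mul_sqrt_one_sub_sq_le htρ.le (htr_one hρ ▸ hE.tr'_le hρ.1) htσ.le
    (htr_one hσ ▸ hE.tr'_le hσ.1) (rootFid_nonneg ρ σ) key
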